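/- arXiv:0802.4325 — 9 statements merged into one kernel-verified Lean document; each statement's English description precedes it below -/
import Mathlib

section
/- Let θ ∈ (0, π/4) and let t ≥ 1/(cos θ − sin θ). Let u, v, z be points in the Euclidean plane with angle(v, u, z) ≤ θ and |uz| ≤ |uv|. Then |uz| + t·|zv| ≤ t·|uv|. -/
/-!
Put `a = |uz|`, `b = |uv|`, `c = |zv|` and let `φ ≤ θ` be the angle at `u`. Since
`sin² θ + cos² θ = 1`,
`(b - a (cos θ - sin θ))² = a² + b² - 2ab cos θ + 2a sin θ (b - a cos θ) ≥ a² + b² - 2ab cos φ = c²`,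
the middle term being nonnegative because `a ≤ b`. Hence `c ≤ b - a (cos θ - sin θ)`, and multiplying
by `t` with `t (cos θ - sin θ) ≥ 1` gives `t c ≤ t b - a`.
-/

open Real EuclideanGeometry

theorem Real.sin_lt_cos_of_nonneg_of_lt_pi_div_four {θ : ℝ} (h₀ : 0 ≤ θ) (h : θ < π / 4) :
    sin θ < cos θ := by
  rw [← sin_pi_div_two_sub]
  exact sin_lt_sin_of_lt_of_le_pi_div_two (by linarith [pi_pos]) (by linarith) (by linarith)

theorem EuclideanGeometry.dist_le_dist_sub_mul_cos_sub_sin {V P : Type*} [NormedAddCommGroup V]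
    [InnerProductSpace ℝ V] [MetricSpace P] [NormedAddTorsor V P] {u v z : P} {θ : ℝ}
    (hθ : θ ≤ π) (hang : ∠ v u z ≤ θ) (hle : dist u z ≤ dist u v) :
    dist z v ≤ dist u v - dist u z * (cos θ - sin θ) := by
  have hlaw := law_cos v u z
  rw [dist_comm v z, dist_comm v u, dist_comm z u] at hlaw
  set a := dist u z
  set b := dist u v
  have ha : 0 ≤ a := dist_nonneg
  have hsin : 0 ≤ sin θ := sin_nonneg_of_nonneg_of_le_pi ((angle_nonneg v u z).trans hang) hθ
  have hcos : cos θ ≤ cos (∠ v u z) :=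
    cos_le_cos_of_nonneg_of_le_pi (angle_nonneg v u z) hθ hang
  have hgap : 0 ≤ b - a * cos θ := by nlinarith [cos_le_one θ]
  have hsq : dist z v ^ 2 ≤ (b - a * (cos θ - sin θ)) ^ 2 :=
    calc dist z v ^ 2 = a ^ 2 + b ^ 2 - 2 * a * b * cos (∠ v u z) := by rw [sq, hlaw]; ring
      _ ≤ a ^ 2 + b ^ 2 - 2 * a * b * cos θ + 2 * a * sin θ * (b - a * cos θ) := by
        have : 0 ≤ a * b := mul_nonneg ha (ha.trans hle)
        nlinarith [mul_nonneg (mul_nonneg ha hsin) hgap]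
      _ = (b - a * (cos θ - sin θ)) ^ 2 := by linear_combination -a ^ 2 * sin_sq_add_cos_sq θ
  exact le_of_sq_le_sq hsq (by nlinarith)

theorem stmt0 (θ t : ℝ) (hθ : θ ∈ Set.Ioo 0 (π/4))
    (ht : 1 / (Real.cos θ - Real.sin θ) ≤ t)
    (u v z : EuclideanSpace ℝ (Fin 2))
    (hang : EuclideanGeometry.angle v u z ≤ θ)
    (hle : dist u z ≤ dist u v) :
    dist u z + t * dist z v ≤ t * dist u v := by
  obtain ⟨hθ₀, hθ₁⟩ := hθ
  have hgap : 0 < cos θ - sin θ :=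
    sub_pos.2 (sin_lt_cos_of_nonneg_of_lt_pi_div_four hθ₀.le hθ₁)
  have htgap : 1 ≤ t * (cos θ - sin θ) := (div_le_iff₀ hgap).1 ht
  have hzv := dist_le_dist_sub_mul_cos_sub_sin (by linarith [pi_pos]) hang hle
  have ht₀ : 0 ≤ t := by nlinarith
  calc dist u z + t * dist z v ≤ dist u z + t * (dist u v - dist u z * (cos θ - sin θ)) := by
        gcongr
    _ = t * dist u v - dist u z * (t * (cos θ - sin θ) - 1) := by ring
    _ ≤ t * dist u v := sub_le_self _ (mul_nonneg dist_nonneg (by linarith))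
end

section
/- Let θ ∈ (0, π/4) and let u, v, z be points in ℝ² with angle(v, u, z) ≤ θ and |uz| ≤ |uv|. Then |zv| < |uv|. -/
open Real EuclideanGeometry

/-- In the triangle `u v z`, the angle at `u` is below `π / 3`, so its cosine exceeds `1 / 2`, and the
law of cosines gives `|zv|² < |uz|² + |uv|² - |uz| |uv| ≤ |uv|²` as `|uz| ≤ |uv|`. -/
theorem EuclideanGeometry.dist_lt_of_angle_lt_pi_div_three {V P : Type*} [NormedAddCommGroup V]
    [InnerProductSpace ℝ V] [MetricSpace P] [NormedAddTorsor V P] {u v z : P}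
    (hang : ∠ v u z < π / 3) (hle : dist u z ≤ dist u v) :
    dist z v < dist u v := by
  have hzu : z ≠ u := by
    rintro rfl
    rw [angle_self_right] at hang
    linarith [pi_pos]
  have hzu_pos : 0 < dist z u := dist_pos.2 hzu
  have hcos : 1 / 2 < cos (∠ z u v) := by
    rw [← cos_pi_div_three, angle_comm]
    exact cos_lt_cos_of_nonneg_of_le_pi (angle_nonneg _ _ _) (by linarith [pi_pos]) hang
  have hlaw := law_cos z u v
  rw [dist_comm v u] at hlaw
  rw [dist_comm u z] at hle
  have hsq : dist z v ^ 2 < dist u v ^ 2 := by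
    nlinarith [mul_pos hzu_pos (hzu_pos.trans_le hle)]
  exact lt_of_pow_lt_pow_left₀ 2 dist_nonneg hsq

theorem stmt1 (θ : ℝ) (hθ : θ ∈ Set.Ioo 0 (π/4))
    (u v z : EuclideanSpace ℝ (Fin 2))
    (hang : EuclideanGeometry.angle v u z ≤ θ)
    (hle : dist u z ≤ dist u v) :
    dist z v < dist u v :=
  dist_lt_of_angle_lt_pi_div_three (hang.trans_lt (hθ.2.trans (by linarith [pi_pos]))) hle
end

section
/- Let θ ∈ (0, π/4) and let u, v, u₁ be points in ℝ² with angle(u, v, u₁) ≤ θ (angle at apex v) and |u₁v| ≤ |uv|. Then |u₁u| < |uv|. -/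
/-!
In the triangle `u v u₁` the law of cosines gives
`|u₁u|² = a² + b² - 2ab cos ∠v` with `a = |uv| ≥ b = |u₁v|`; an apex angle below `π / 3` means
`2 cos ∠v > 1`, so `|u₁u|² < a² + b² - ab = a² - b (a - b) ≤ a²`.
-/

open Real EuclideanGeometry

theorem EuclideanGeometry.dist_lt_of_angle_lt_pi_div_three_of_dist_le
    {V P : Type*} [NormedAddCommGroup V] [InnerProductSpace ℝ V] [MetricSpace P]
    [NormedAddTorsor V P] {u v u₁ : P} (hang : ∠ u v u₁ < π / 3)
    (hle : dist u₁ v ≤ dist u v) :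
    dist u₁ u < dist u v := by
  have hu : u ≠ v := by
    rintro rfl
    rw [angle_self_left] at hang
    linarith [pi_pos]
  have hu₁ : u₁ ≠ v := by
    rintro rfl
    rw [angle_self_right] at hang
    linarith [pi_pos]
  have ha : 0 < dist u v := dist_pos.2 hu
  have hb : 0 < dist u₁ v := dist_pos.2 hu₁
  have hcos : 1 / 2 < cos (∠ u v u₁) := by
    rw [← cos_pi_div_three]
    exact cos_lt_cos_of_nonneg_of_le_pi (angle_nonneg u v u₁) (by linarith [pi_pos]) hang
  have hsq : dist u u₁ * dist u u₁ < dist u v * dist u v := by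
    nlinarith [law_cos u v u₁, mul_pos (mul_pos ha hb) (sub_pos.2 hcos),
      mul_le_mul_of_nonneg_left hle hb.le]
  rw [dist_comm u₁ u]
  exact (mul_self_lt_mul_self_iff dist_nonneg ha.le).2 hsq

theorem stmt2 (θ : ℝ) (hθ : θ ∈ Set.Ioo 0 (π/4))
    (u v u₁ : EuclideanSpace ℝ (Fin 2))
    (hang : EuclideanGeometry.angle u v u₁ ≤ θ)
    (hle : dist u₁ v ≤ dist u v) :
    dist u₁ u < dist u v :=
  dist_lt_of_angle_lt_pi_div_three_of_dist_le
    (hang.trans_lt (hθ.2.trans (by linarith [pi_pos]))) hle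
end

section
/- Let θ ∈ (0, π/2), and let u, v₁, u₁ be points in ℝ² with angle(u, v₁, u₁) ≤ θ (angle at apex v₁) and |u₁v₁| ≤ |uv₁|. Then |uu₁| ≤ |uv₁| − |u₁v₁|·cos θ + |u₁v₁|·sin θ. -/
/-!
By the law of cosines, `|uu₁|² ≤ a² + b² - 2ab cos θ` with `a = |uv₁|`, `b = |u₁v₁|`. Squaring the
right-hand side `a - b cos θ + b sin θ` gives the same quantity plus `2b sin θ (a - b cos θ)`, which is
nonnegative because `b cos θ ≤ b ≤ a`.
-/

open Real EuclideanGeometry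

theorem Real.sq_add_sq_sub_mul_cos_le {a b θ : ℝ} (hb : 0 ≤ b) (hba : b ≤ a) (hsin : 0 ≤ sin θ) :
    a ^ 2 + b ^ 2 - 2 * a * b * cos θ ≤ (a - b * cos θ + b * sin θ) ^ 2 := by
  have hgap : 0 ≤ a - b * cos θ := by nlinarith [cos_le_one θ]
  calc a ^ 2 + b ^ 2 - 2 * a * b * cos θ
      ≤ a ^ 2 + b ^ 2 - 2 * a * b * cos θ + 2 * (b * sin θ) * (a - b * cos θ) :=
        le_add_of_nonneg_right (by positivity)
    _ = (a - b * cos θ + b * sin θ) ^ 2 := by linear_combination -b ^ 2 * sin_sq_add_cos_sq θ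

namespace EuclideanGeometry

variable {V P : Type*} [NormedAddCommGroup V] [InnerProductSpace ℝ V] [MetricSpace P]
  [NormedAddTorsor V P]

theorem dist_sq_le_of_angle_le {p₁ p₂ p₃ : P} {θ : ℝ} (hθ : θ ≤ π) (h : ∠ p₁ p₂ p₃ ≤ θ) :
    dist p₁ p₃ ^ 2 ≤ dist p₁ p₂ ^ 2 + dist p₃ p₂ ^ 2 - 2 * dist p₁ p₂ * dist p₃ p₂ * cos θ := by
  have hcos : cos θ ≤ cos (∠ p₁ p₂ p₃) := cos_le_cos_of_nonneg_of_le_pi (angle_nonneg _ _ _) hθ h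
  have hlaw := law_cos p₁ p₂ p₃
  nlinarith [mul_nonneg (dist_nonneg (x := p₁) (y := p₂)) (dist_nonneg (x := p₃) (y := p₂))]

theorem dist_le_sub_mul_cos_add_mul_sin_of_angle_le {u v w : P} {θ : ℝ} (hθ₀ : 0 ≤ θ)
    (hθπ : θ ≤ π) (hang : ∠ u v w ≤ θ) (hle : dist w v ≤ dist u v) :
    dist u w ≤ dist u v - dist w v * cos θ + dist w v * sin θ := by
  have hsin : 0 ≤ sin θ := sin_nonneg_of_nonneg_of_le_pi hθ₀ hθπ
  have hrhs : 0 ≤ dist u v - dist w v * cos θ + dist w v * sin θ := by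
    nlinarith [cos_le_one θ, dist_nonneg (x := w) (y := v)]
  refine le_of_pow_le_pow_left₀ two_ne_zero hrhs ?_
  exact (dist_sq_le_of_angle_le hθπ hang).trans
    (sq_add_sq_sub_mul_cos_le dist_nonneg hle hsin)

end EuclideanGeometry

theorem stmt3 (θ : ℝ) (hθ : θ ∈ Set.Ioo 0 (π/2))
    (u v₁ u₁ : EuclideanSpace ℝ (Fin 2))
    (hang : EuclideanGeometry.angle u v₁ u₁ ≤ θ)
    (hle : dist u₁ v₁ ≤ dist u v₁) :
    dist u u₁ ≤ dist u v₁ - dist u₁ v₁ * Real.cos θ + dist u₁ v₁ * Real.sin θ :=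
  dist_le_sub_mul_cos_add_mul_sin_of_angle_le hθ.1.le (by linarith [hθ.2, pi_pos]) hang hle
end

section
/- Let θ ∈ (0, π/2), and let u, v, v₁ be points in ℝ² with angle(v, u, v₁) ≤ θ (angle at apex u) and |uv₁| ≤ |uv|. Then |v₁v| ≤ |uv| − |uv₁|·cos θ + |uv₁|·sin θ. -/
/-! Write `a = |uv|`, `b = |uv₁|`, `α = ∠ v u v₁`. By the law of cosines,
`(a - b cos α + b sin α)² = |v₁v|² + 2 b sin α (a - b cos α)`, and `b cos α ≤ b ≤ a`, so
`|v₁v| ≤ a - b cos α + b sin α` (the triangle inequality through the foot of `v₁` on `uv`).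
On `[0, π/2]` this bound only grows when `α` is replaced by the larger angle `θ`. -/

open Real EuclideanGeometry

namespace EuclideanGeometry

variable {V P : Type*} [NormedAddCommGroup V] [InnerProductSpace ℝ V] [MetricSpace P]
  [NormedAddTorsor V P]

theorem dist_le_dist_sub_mul_cos_add_mul_sin_angle {u v w : P}
    (h : dist u w * cos (∠ v u w) ≤ dist u v) :
    dist w v ≤ dist u v - dist u w * cos (∠ v u w) + dist u w * sin (∠ v u w) := by
  set a := dist u v
  set b := dist u w
  set α := ∠ v u w
  have hlaw : dist w v ^ 2 = a ^ 2 + b ^ 2 - 2 * b * a * cos α := by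
    have := law_cos w u v
    rw [angle_comm, dist_comm w u, dist_comm v u] at this
    linear_combination this
  have hb : 0 ≤ b := dist_nonneg
  have hsin : 0 ≤ sin α := sin_nonneg_of_nonneg_of_le_pi (angle_nonneg _ _ _) (angle_le_pi _ _ _)
  have hsq : dist w v ^ 2 ≤ (a - b * cos α + b * sin α) ^ 2 := by
    have hgap : 0 ≤ 2 * (b * sin α) * (a - b * cos α) :=
      mul_nonneg (mul_nonneg two_pos.le (mul_nonneg hb hsin)) (sub_nonneg.2 h)
    nlinarith [sin_sq_add_cos_sq α]
  exact abs_le_of_sq_le_sq' hsq (by nlinarith [mul_nonneg hb hsin]) |>.2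

end EuclideanGeometry

theorem stmt4 (θ : ℝ) (hθ : θ ∈ Set.Ioo 0 (π/2))
    (u v v₁ : EuclideanSpace ℝ (Fin 2))
    (hang : EuclideanGeometry.angle v u v₁ ≤ θ)
    (hle : dist u v₁ ≤ dist u v) :
    dist v₁ v ≤ dist u v - dist u v₁ * Real.cos θ + dist u v₁ * Real.sin θ := by
  set α := ∠ v u v₁
  have hα : 0 ≤ α := angle_nonneg _ _ _
  have hcos : cos θ ≤ cos α :=
    cos_le_cos_of_nonneg_of_le_pi hα (by linarith [hθ.2, pi_pos]) hang
  have hsin : sin α ≤ sin θ :=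
    sin_le_sin_of_le_of_le_pi_div_two (by linarith [pi_pos]) hθ.2.le hang
  have hb : 0 ≤ dist u v₁ := dist_nonneg
  have hproj : dist u v₁ * cos α ≤ dist u v :=
    (mul_le_of_le_one_right hb (cos_le_one α)).trans hle
  calc dist v₁ v ≤ dist u v - dist u v₁ * cos α + dist u v₁ * sin α :=
        dist_le_dist_sub_mul_cos_add_mul_sin_angle hproj
    _ ≤ dist u v - dist u v₁ * cos θ + dist u v₁ * sin θ := by
        gcongr
end

section
/- Let θ ∈ (0, π/4), and let u, v, w be points in ℝ² with angle(w, v, u) ≤ θ (angle at apex v) and |wv| < |uv|/(2 cos θ). Then angle(w, u, v) < θ (angle at apex u). -/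
open Real EuclideanGeometry

/-!
Write `α = ∠wvu`, `β = ∠wuv` and suppose `β ≥ θ`. The law of sines in the triangle `uvw` gives
`sin β · |uv| = sin (α + β) · |wv|`, while for `α ≤ θ ≤ β` and `θ ≤ π/4`
`sin (α + β) ≤ 2 cos θ · sin β`, since `sin θ · sin (α + β) ≤ sin β · sin (α + θ) ≤ sin β · sin 2θ`.
Together with `2 cos θ · |wv| < |uv|` this is impossible as soon as `sin β > 0`. The degenerate
case `β = π` puts `u` between `w` and `v`, so `|wv| ≥ |uv|`, which contradicts `2 cos θ ≥ 1`.
-/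

lemma Real.sin_mul_sin_add_sub_sin_mul_sin_add (α β θ : ℝ) :
    sin β * sin (α + θ) - sin θ * sin (α + β) = sin α * sin (β - θ) := by
  simp only [sin_add, sin_sub]
  ring

lemma Real.one_le_two_mul_cos_of_abs_le_pi_div_four {θ : ℝ} (hθ : |θ| ≤ π / 4) :
    1 ≤ 2 * cos θ := by
  have h : cos (π / 4) ≤ cos θ := by
    rw [← cos_abs θ]
    exact cos_le_cos_of_nonneg_of_le_pi (abs_nonneg θ) (by linarith [pi_pos]) hθ
  rw [cos_pi_div_four] at h
  nlinarith [sq_sqrt (show (0 : ℝ) ≤ 2 by norm_num), sqrt_nonneg 2]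

lemma Real.sin_add_le_two_mul_cos_mul_sin {α β θ : ℝ} (hα : 0 ≤ α) (hαθ : α ≤ θ)
    (hθβ : θ ≤ β) (hβ : β ≤ π) (hθ : 0 < θ) (hθ4 : θ ≤ π / 4) :
    sin (α + β) ≤ 2 * cos θ * sin β := by
  have hsinθ : 0 < sin θ := sin_pos_of_pos_of_lt_pi hθ (by linarith [pi_pos])
  have hβθ : sin θ * sin (α + β) ≤ sin β * sin (α + θ) := by
    have := Real.sin_mul_sin_add_sub_sin_mul_sin_add α β θ
    have := mul_nonneg (sin_nonneg_of_nonneg_of_le_pi hα (by linarith))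
      (sin_nonneg_of_nonneg_of_le_pi (sub_nonneg.2 hθβ) (by linarith))
    linarith
  have hαθ2 : sin (α + θ) ≤ sin (2 * θ) :=
    sin_le_sin_of_le_of_le_pi_div_two (by linarith [pi_pos]) (by linarith) (by linarith)
  have hsinβ : 0 ≤ sin β := sin_nonneg_of_nonneg_of_le_pi (by linarith) hβ
  rw [sin_two_mul] at hαθ2
  refine le_of_mul_le_mul_left ?_ hsinθ
  nlinarith [mul_le_mul_of_nonneg_left hαθ2 hsinβ]

section

variable {V P : Type*} [NormedAddCommGroup V] [InnerProductSpace ℝ V] [MetricSpace P]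
  [NormedAddTorsor V P]

lemma EuclideanGeometry.sin_angle_mul_dist_eq_sin_add_mul_dist {u v : P} (w : P) (huv : u ≠ v) :
    sin (∠ w u v) * dist u v = sin (∠ w v u + ∠ w u v) * dist w v := by
  have hsum := angle_add_angle_add_angle_eq_pi w huv.symm
  rw [angle_comm u v w, angle_comm v w u] at hsum
  rw [law_sin w u v, dist_comm v w, angle_comm v w u,
    show ∠ u w v = π - (∠ w v u + ∠ w u v) by linarith, sin_pi_sub]

lemma EuclideanGeometry.angle_lt_of_angle_le_of_two_mul_cos_mul_dist_lt {u v w : P} {θ : ℝ}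
    (hθ : 0 < θ) (hθ4 : θ ≤ π / 4) (hang : ∠ w v u ≤ θ)
    (hdist : 2 * cos θ * dist w v < dist u v) :
    ∠ w u v < θ := by
  have hcos : 1 ≤ 2 * cos θ :=
    Real.one_le_two_mul_cos_of_abs_le_pi_div_four (abs_le.2 ⟨by linarith, hθ4⟩)
  have hwv : dist w v < dist u v := by nlinarith [dist_nonneg (x := w) (y := v)]
  have huv : u ≠ v := by
    rintro rfl
    linarith [dist_self u, dist_nonneg (x := w) (y := u)]
  by_contra! hβ
  have hβπ : ∠ w u v ≠ π := fun h => by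
    linarith [(angle_eq_pi_iff_sbtw.1 h).wbtw.dist_add_dist, dist_nonneg (x := w) (y := u)]
  have hsinβ : 0 < sin (∠ w u v) :=
    sin_pos_of_pos_of_lt_pi (by linarith) ((angle_le_pi w u v).lt_of_ne hβπ)
  have hkey := Real.sin_add_le_two_mul_cos_mul_sin (angle_nonneg w v u) hang hβ
    (angle_le_pi w u v) hθ hθ4
  have : sin (∠ w u v) * dist u v < sin (∠ w u v) * dist u v :=
    calc sin (∠ w u v) * dist u v = sin (∠ w v u + ∠ w u v) * dist w v :=
          sin_angle_mul_dist_eq_sin_add_mul_dist w huv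
      _ ≤ 2 * cos θ * sin (∠ w u v) * dist w v := by gcongr
      _ = sin (∠ w u v) * (2 * cos θ * dist w v) := by ring
      _ < sin (∠ w u v) * dist u v := by gcongr
  exact this.false

end

theorem stmt7 (θ : ℝ) (hθ : θ ∈ Set.Ioo 0 (π/4))
    (u v w : EuclideanSpace ℝ (Fin 2))
    (hang : EuclideanGeometry.angle w v u ≤ θ)
    (hlt : dist w v < dist u v / (2 * Real.cos θ)) :
    EuclideanGeometry.angle w u v < θ := by
  obtain ⟨hθ0, hθ4⟩ := hθ
  have hcos : 1 ≤ 2 * cos θ :=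
    Real.one_le_two_mul_cos_of_abs_le_pi_div_four (abs_le.2 ⟨by linarith, hθ4.le⟩)
  rw [lt_div_iff₀ (by linarith), mul_comm] at hlt
  exact angle_lt_of_angle_le_of_two_mul_cos_mul_dist_lt hθ0 hθ4.le hang hlt
end

section
/- Let θ ∈ (0, π/4), r > 1, λ = 1/(2r cos θ), and t ≥ (λ/cos 2θ)/((λ+1)(cos θ − sin θ) − 1), with (cos θ − sin θ) > 1/(λ+1). Let u, v, v₁, w be points in ℝ² such that angle(v, u, v₁) ≤ θ, angle(u, v₁, w) ≤ θ, |uv₁| ≤ |uv|, |w v₁| ≤ |u v₁|, and |w v₁| ≥ |u v₁|/(2 r cos θ). Then t·|uw| + |w v₁|/cos(2θ) + t·|v₁ v| ≤ t·|uv|. -/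
/-!
Both recursive paths are shorter than the segments they replace by a definite amount: if
`∠ q p r ≤ θ` and `|pr| ≤ |pq|`, the law of cosines gives `|qr| ≤ |qp| - κ |rp|` with
`κ = cos θ - sin θ`. Applied at `u` and at `v₁`, this bounds `|uw| + |v₁v|` by
`|uv| - (κ (|uv₁| + |wv₁|) - |uv₁|)`, and the lower bound `|wv₁| ≥ λ |uv₁|` together with the
choice of `t` makes this saving pay for the sink-tree path of length `|wv₁| / cos 2θ`.
-/

open Real EuclideanGeometry

section Geometry

variable {V P : Type*} [NormedAddCommGroup V] [InnerProductSpace ℝ V] [MetricSpace P]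
  [NormedAddTorsor V P]

theorem dist_le_dist_sub_mul_dist_of_angle_le {θ : ℝ} (hθ₀ : 0 ≤ θ) (hθπ : θ ≤ π)
    {p q r : P} (hang : ∠ q p r ≤ θ) (hle : dist r p ≤ dist q p) :
    dist q r ≤ dist q p - (cos θ - sin θ) * dist r p := by
  have hcos : cos θ ≤ cos (∠ q p r) :=
    cos_le_cos_of_nonneg_of_le_pi (angle_nonneg q p r) hθπ hang
  have hs : 0 ≤ sin θ := sin_nonneg_of_nonneg_of_le_pi hθ₀ hθπ
  have hc : cos θ ≤ 1 := cos_le_one θ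
  have hrp : 0 ≤ dist r p := dist_nonneg
  have hqp : 0 ≤ dist q p := dist_nonneg
  have hrhs : 0 ≤ dist q p - (cos θ - sin θ) * dist r p := by nlinarith
  have hsq : dist q r ^ 2 ≤ (dist q p - (cos θ - sin θ) * dist r p) ^ 2 := by
    have hlaw := law_cos q p r
    nlinarith [sin_sq_add_cos_sq θ, mul_nonneg (mul_nonneg hrp (sub_nonneg.2 hle)) hs,
      mul_nonneg (mul_nonneg hrp hrp) (mul_nonneg hs (sub_nonneg.2 hc)),
      mul_nonneg (mul_nonneg hqp hrp) (sub_nonneg.2 hcos)]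
  exact (pow_le_pow_iff_left₀ dist_nonneg hrhs two_ne_zero).1 hsq

end Geometry

theorem spanner_path_bound {κ l c t a b d x y : ℝ} (hc : 0 < c) (hl : 0 < l) (hκ₁ : κ ≤ 1)
    (hκ : 1 / (l + 1) < κ) (ht : l / c / ((l + 1) * κ - 1) ≤ t)
    (ha : 0 ≤ a) (hab : l * a ≤ b) (hx : x ≤ a - κ * b) (hy : y ≤ d - κ * a) :
    t * x + b / c + t * y ≤ t * d := by
  have hD : 0 < (l + 1) * κ - 1 := by
    rw [div_lt_iff₀ (by positivity)] at hκ
    linarith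
  have hlt : l ≤ t * c * ((l + 1) * κ - 1) := by
    rw [div_div, div_le_iff₀ (by positivity)] at ht
    linarith
  have ht₀ : 0 ≤ t := by
    by_contra! h
    nlinarith [mul_neg_of_neg_of_pos h (mul_pos hc hD)]
  have hb : 0 ≤ b := le_trans (mul_nonneg hl.le ha) hab
  -- `l (κ (a + b) - a) - b ((l + 1) κ - 1) = (1 - κ) (b - l a)`
  have hsaving : b * ((l + 1) * κ - 1) ≤ l * (κ * (a + b) - a) := by
    nlinarith [mul_nonneg (sub_nonneg.2 hκ₁) (sub_nonneg.2 hab)]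
  have hpaths : κ * (a + b) - a ≤ d - x - y := by linarith
  have hlb : l * b ≤ l * (t * c * (d - x - y)) := by
    calc l * b ≤ t * c * ((l + 1) * κ - 1) * b := mul_le_mul_of_nonneg_right hlt hb
      _ = t * c * (b * ((l + 1) * κ - 1)) := by ring
      _ ≤ t * c * (l * (κ * (a + b) - a)) := by gcongr
      _ ≤ t * c * (l * (d - x - y)) := by gcongr
      _ = l * (t * c * (d - x - y)) := by ring
  have hbc : b / c ≤ t * (d - x - y) := by
    rw [div_le_iff₀ hc]
    linarith [le_of_mul_le_mul_left hlb hl]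
  linarith

theorem stmt11 (θ r t : ℝ) (hθ : θ ∈ Set.Ioo 0 (π/4)) (hr : 1 < r)
    (hcs : Real.cos θ - Real.sin θ > 1 / (1 / (2 * r * Real.cos θ) + 1))
    (ht : (1 / (2 * r * Real.cos θ) / Real.cos (2 * θ)) /
        ((1 / (2 * r * Real.cos θ) + 1) * (Real.cos θ - Real.sin θ) - 1) ≤ t)
    (u v v₁ w : EuclideanSpace ℝ (Fin 2))
    (hang1 : EuclideanGeometry.angle v u v₁ ≤ θ)
    (hang2 : EuclideanGeometry.angle u v₁ w ≤ θ)
    (h1 : dist u v₁ ≤ dist u v)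
    (h2 : dist w v₁ ≤ dist u v₁)
    (h3 : dist u v₁ / (2 * r * Real.cos θ) ≤ dist w v₁) :
    t * dist u w + dist w v₁ / Real.cos (2 * θ) + t * dist v₁ v ≤ t * dist u v := by
  obtain ⟨hθ₀, hθ₁⟩ := hθ
  have hθπ : θ ≤ π := by linarith [pi_pos]
  have hcos : 0 < cos θ := cos_pos_of_mem_Ioo ⟨by linarith [pi_pos], by linarith⟩
  have hcos2 : 0 < cos (2 * θ) := cos_pos_of_mem_Ioo ⟨by linarith [pi_pos], by linarith⟩
  have hκ₁ : cos θ - sin θ ≤ 1 := by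
    linarith [cos_le_one θ, sin_nonneg_of_nonneg_of_le_pi hθ₀.le hθπ]
  have hvv : dist v₁ v ≤ dist u v - (cos θ - sin θ) * dist u v₁ := by
    have h := dist_le_dist_sub_mul_dist_of_angle_le hθ₀.le hθπ hang1
      (by rwa [dist_comm v₁ u, dist_comm v u])
    rwa [dist_comm v v₁, dist_comm v₁ u, dist_comm v u] at h
  have huw : dist u w ≤ dist u v₁ - (cos θ - sin θ) * dist w v₁ :=
    dist_le_dist_sub_mul_dist_of_angle_le hθ₀.le hθπ hang2 h2
  exact spanner_path_bound hcos2 (by positivity) hκ₁ hcs ht dist_nonneg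
    (by rwa [one_div_mul_eq_div]) huw hvv
end

section
/- Let s ≥ 2 and consider the 2s points uᵢ = (i/(s−1), 1), vᵢ = (i/(s−1), 0), i = 0,…,s−1. The graph on these points consisting of the s vertical edges uᵢvᵢ has total edge length s, while there exists a spanning tree of the 2s points of total length at most 3. -/
/-!
Number the `2s` points along the path `u_{s-1}, …, u_0, v_0, …, v_{s-1}`. The path graph
transported along this numbering is a spanning tree; it consists of `s - 1` horizontal edges of
length `1/(s-1)` in each row and the single vertical edge `u_0 v_0`, so its weight is exactly `3`.
-/

/-- The `2s` points: `s` on the top side and `s` on the bottom side of a unit square. -/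
noncomputable def squarePts (s : ℕ) : Fin s ⊕ Fin s → EuclideanSpace ℝ (Fin 2) :=
  Sum.elim
    (fun i => (WithLp.equiv 2 (Fin 2 → ℝ)).symm ![(i : ℝ) / ((s : ℝ) - 1), 1])
    (fun i => (WithLp.equiv 2 (Fin 2 → ℝ)).symm ![(i : ℝ) / ((s : ℝ) - 1), 0])

namespace SimpleGraph

instance (n : ℕ) : DecidableRel (pathGraph n).Adj := fun _ _ => decidable_of_iff' _ pathGraph_adj

@[simps]
def pathGraphEdge (n : ℕ) : Fin n ↪ Sym2 (Fin (n + 1)) where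
  toFun k := s(k.castSucc, k.succ)
  inj' i j h := by
    simp only [Sym2.eq_iff, Fin.ext_iff, Fin.val_castSucc, Fin.val_succ] at h
    omega

lemma edgeFinset_pathGraph (n : ℕ) :
    (pathGraph (n + 1)).edgeFinset = Finset.univ.map (pathGraphEdge n) := by
  ext e
  induction e using Sym2.ind with | _ u v => ?_
  simp only [mem_edgeFinset, mem_edgeSet, pathGraph_adj, Finset.mem_map, Finset.mem_univ,
    true_and, pathGraphEdge_apply, Sym2.eq_iff, Fin.ext_iff, Fin.val_castSucc, Fin.val_succ]
  constructor
  · rintro (h | h)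
    · exact ⟨⟨u, by omega⟩, .inl ⟨rfl, h⟩⟩
    · exact ⟨⟨v, by omega⟩, .inr ⟨rfl, h⟩⟩
  · rintro ⟨k, h | h⟩ <;> omega

lemma pathGraph_isTree (n : ℕ) : (pathGraph (n + 1)).IsTree := by
  rw [isTree_iff_connected_and_card, Nat.card_eq_fintype_card, ← edgeFinset_card,
    edgeFinset_pathGraph]
  exact ⟨pathGraph_connected n, by simp⟩

lemma IsTree.map_equiv {V W : Type*} {G : SimpleGraph V} (h : G.IsTree) (e : V ≃ W) :
    (G.map e.toEmbedding).IsTree :=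
  (Iso.map e G).isTree_iff.mp h

lemma sum_edgeFinset_map_pathGraph {V M : Type*} [Fintype V] [DecidableEq V] [AddCommMonoid M]
    {n : ℕ} (e : Fin (n + 1) ≃ V) [DecidableRel ((pathGraph (n + 1)).map e.toEmbedding).Adj]
    (f : Sym2 V → M) :
    ∑ x ∈ ((pathGraph (n + 1)).map e.toEmbedding).edgeFinset, f x =
      ∑ k : Fin n, f s(e k.castSucc, e k.succ) := by
  have h : ((pathGraph (n + 1)).map e.toEmbedding).edgeFinset =
      (pathGraph (n + 1)).edgeFinset.map e.toEmbedding.sym2Map := by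
    convert edgeFinset_map e.toEmbedding (pathGraph (n + 1))
  rw [h, edgeFinset_pathGraph, Finset.map_map, Finset.sum_map]
  rfl

end SimpleGraph

lemma dist_squarePts_inl (s : ℕ) (i j : Fin s) :
    dist (squarePts s (.inl i)) (squarePts s (.inl j)) = |(i : ℝ) - j| / |(s : ℝ) - 1| := by
  simp [squarePts, EuclideanSpace.dist_eq, Fin.sum_univ_two, Real.dist_eq, ← sub_div,
    Real.sqrt_sq_eq_abs, abs_div]

lemma dist_squarePts_inr (s : ℕ) (i j : Fin s) :
    dist (squarePts s (.inr i)) (squarePts s (.inr j)) = |(i : ℝ) - j| / |(s : ℝ) - 1| := by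
  simp [squarePts, EuclideanSpace.dist_eq, Fin.sum_univ_two, Real.dist_eq, ← sub_div,
    Real.sqrt_sq_eq_abs, abs_div]

lemma dist_squarePts_inl_inr (s : ℕ) (i : Fin s) :
    dist (squarePts s (.inl i)) (squarePts s (.inr i)) = 1 := by
  simp [squarePts, EuclideanSpace.dist_eq, Fin.sum_univ_two, Real.dist_eq]

/-- Position `k < m + 1` is `u_{m-k}`, position `m + 1 + j` is `v_j`. -/
def squarePathOrder (m : ℕ) : Fin (m + 1 + m + 1) ≃ Fin (m + 1) ⊕ Fin (m + 1) :=
  (finSumFinEquiv (m := m + 1) (n := m + 1)).symm.trans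
    (Equiv.sumCongr Fin.revPerm (Equiv.refl _))

@[simp] lemma squarePathOrder_castAdd (m : ℕ) (i : Fin (m + 1)) :
    squarePathOrder m (Fin.castAdd (m + 1) i) = .inl i.rev := by
  simp [squarePathOrder]

@[simp] lemma squarePathOrder_natAdd (m : ℕ) (j : Fin (m + 1)) :
    squarePathOrder m (Fin.natAdd (m + 1) j) = .inr j := by
  simp only [squarePathOrder, Equiv.trans_apply, finSumFinEquiv_symm_apply_natAdd,
    Equiv.sumCongr_apply, Sum.map_inr]
  rfl

lemma sum_dist_squarePathOrder {m : ℕ} (hm : m ≠ 0) :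
    ∑ k : Fin (m + 1 + m), dist (squarePts (m + 1) (squarePathOrder m k.castSucc))
      (squarePts (m + 1) (squarePathOrder m k.succ)) = 3 := by
  have top₀ (i : Fin m) :
      squarePathOrder m (Fin.castAdd m i.castSucc).castSucc = .inl i.castSucc.rev :=
    squarePathOrder_castAdd m i.castSucc
  have top₁ (i : Fin m) : squarePathOrder m (Fin.castAdd m i.castSucc).succ = .inl i.succ.rev :=
    squarePathOrder_castAdd m i.succ
  have cross₀ : squarePathOrder m (Fin.castAdd m (Fin.last m)).castSucc = .inl 0 := by
    rw [← Fin.rev_last]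
    exact squarePathOrder_castAdd m (Fin.last m)
  have cross₁ : squarePathOrder m (Fin.castAdd m (Fin.last m)).succ = .inr 0 :=
    squarePathOrder_natAdd m 0
  have bot₀ (j : Fin m) : squarePathOrder m (Fin.natAdd (m + 1) j).castSucc = .inr j.castSucc :=
    squarePathOrder_natAdd m j.castSucc
  have bot₁ (j : Fin m) : squarePathOrder m (Fin.natAdd (m + 1) j).succ = .inr j.succ :=
    squarePathOrder_natAdd m j.succ
  have hm' : (m : ℝ) ≠ 0 := by exact_mod_cast hm
  rw [Fin.sum_univ_add, Fin.sum_univ_castSucc]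
  simp only [top₀, top₁, cross₀, cross₁, bot₀, bot₁, dist_squarePts_inl, dist_squarePts_inr,
    dist_squarePts_inl_inr, Fin.rev_castSucc, Fin.rev_succ]
  simp [mul_inv_cancel₀ hm']
  norm_num

theorem stmt14 (s : ℕ) (hs : 2 ≤ s) :
    (∑ i : Fin s, dist (squarePts s (Sum.inl i)) (squarePts s (Sum.inr i))) = s ∧
    ∃ (T : SimpleGraph (Fin s ⊕ Fin s)) (_ : DecidableRel T.Adj),
      T.IsTree ∧
      ∑ e ∈ T.edgeFinset,
        Sym2.lift ⟨fun a b => dist (squarePts s a) (squarePts s b),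
          fun _ _ => dist_comm _ _⟩ e ≤ 3 := by
  obtain ⟨m, rfl⟩ : ∃ m, s = m + 1 := ⟨s - 1, by omega⟩
  refine ⟨by simp [dist_squarePts_inl_inr], (SimpleGraph.pathGraph (m + 1 + m + 1)).map
    (squarePathOrder m).toEmbedding, inferInstance,
    (SimpleGraph.pathGraph_isTree _).map_equiv _, ?_⟩
  rw [SimpleGraph.sum_edgeFinset_map_pathGraph]
  simp only [Sym2.lift_mk]
  rw [sum_dist_squarePathOrder (by omega)]
end

section
/- For any θ ∈ (0, π/4) and points u, v, w in ℝ² with u ≠ v, if angle(w, v, u) ≤ θ and |wv| < |uv|/(2 cos θ), then |uv| − |wv| cos(angle(w,v,u)) > 0 and tan(angle(w,u,v)) ≤ (|wv| sin θ)/(|uv| − |wv| cos θ). -/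
open Real EuclideanGeometry

/-!
With `α = ∠ w v u`, projecting `w` onto the line `uv` gives, in every triangle,
`tan ∠ w u v = |wv| sin α / (|uv| - |wv| cos α)` (the two Gram determinants of the sides agree).
The right-hand side is increasing in `α` as long as `|wv| < |uv| cos α`, and for `θ < π / 4` we
have `2 cos² θ > 1`, so `|wv| < |uv| / (2 cos θ) < |uv| cos θ ≤ |uv| cos α`.
-/

namespace InnerProductGeometry

open scoped RealInnerProductSpace

variable {V : Type*} [NormedAddCommGroup V] [InnerProductSpace ℝ V]

theorem tan_angle_eq_sqrt_div_inner (x y : V) :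
    tan (angle x y) = √(⟪x, x⟫ * ⟪y, y⟫ - ⟪x, y⟫ * ⟪x, y⟫) / ⟪x, y⟫ := by
  rcases eq_or_ne x 0 with rfl | hx
  · simp
  rcases eq_or_ne y 0 with rfl | hy
  · simp
  have hxy : ‖x‖ * ‖y‖ ≠ 0 := by positivity
  rw [tan_eq_sin_div_cos, ← mul_div_mul_right _ _ hxy, sin_angle_mul_norm_mul_norm,
    cos_angle_mul_norm_mul_norm]

theorem tan_angle_add_eq_norm_mul_sin_div (y z : V) :
    tan (angle (y + z) y) =
      ‖z‖ * sin (angle z (-y)) / (‖y‖ - ‖z‖ * cos (angle z (-y))) := by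
  rcases eq_or_ne y 0 with rfl | hy
  · simp
  have hgram : ⟪y + z, y + z⟫ * ⟪y, y⟫ - ⟪y + z, y⟫ * ⟪y + z, y⟫ =
      ⟪z, z⟫ * ⟪-y, -y⟫ - ⟪z, -y⟫ * ⟪z, -y⟫ := by
    simp only [inner_add_left, inner_add_right, inner_neg_left, inner_neg_right, real_inner_comm y z]
    ring
  have hinner : ⟪y + z, y⟫ = (‖y‖ - ‖z‖ * cos (angle z (-y))) * ‖y‖ := by
    have := cos_angle_mul_norm_mul_norm z (-y)
    rw [norm_neg, inner_neg_right] at this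
    rw [inner_add_left, real_inner_self_eq_norm_mul_norm]
    linear_combination this
  rw [tan_angle_eq_sqrt_div_inner, hgram, ← sin_angle_mul_norm_mul_norm, norm_neg, hinner,
    ← mul_assoc, mul_div_mul_right _ _ (norm_ne_zero_iff.2 hy), mul_comm]

end InnerProductGeometry

namespace EuclideanGeometry

variable {V P : Type*} [NormedAddCommGroup V] [InnerProductSpace ℝ V] [MetricSpace P]
  [NormedAddTorsor V P]

theorem tan_angle_eq_dist_mul_sin_div (u v w : P) :
    tan (∠ w u v) = dist w v * sin (∠ w v u) / (dist u v - dist w v * cos (∠ w v u)) := by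
  rw [angle, angle, ← vsub_add_vsub_cancel w v u, add_comm, ← neg_vsub_eq_vsub_rev v u,
    InnerProductGeometry.tan_angle_add_eq_norm_mul_sin_div, dist_eq_norm_vsub V w v,
    dist_eq_norm_vsub' V u v]

end EuclideanGeometry

theorem mul_sin_div_sub_mul_cos_le {α θ r c : ℝ} (hα : 0 ≤ α) (hαθ : α ≤ θ) (hθ : θ ≤ π)
    (hr : 0 ≤ r) (hc : 0 < c) (hrc : r < c * cos θ) :
    r * sin α / (c - r * cos α) ≤ r * sin θ / (c - r * cos θ) := by
  have hrc' : r < c := hrc.trans_le (mul_le_of_le_one_right hc.le (cos_le_one θ))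
  have hdα : 0 < c - r * cos α := by nlinarith [cos_le_one α]
  have hdθ : 0 < c - r * cos θ := by nlinarith [cos_le_one θ]
  rw [div_le_div_iff₀ hdα hdθ]
  -- sum-to-product: both sides of `r sin (θ - α) ≤ c (sin θ - sin α)` share a factor
  -- `2 sin ((θ - α) / 2) ≥ 0`
  have hsin_sub : sin (θ - α) = 2 * sin ((θ - α) / 2) * cos ((θ - α) / 2) := by
    rw [← sin_two_mul]; ring_nf
  have hhalf : r * cos ((θ - α) / 2) ≤ c * cos ((θ + α) / 2) := calc
    r * cos ((θ - α) / 2) ≤ r := mul_le_of_le_one_right hr (cos_le_one _)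
    _ ≤ c * cos θ := hrc.le
    _ ≤ c * cos ((θ + α) / 2) := by
      gcongr
      exact cos_le_cos_of_nonneg_of_le_pi (by linarith) hθ (by linarith)
  have hkey : r * sin (θ - α) ≤ c * (sin θ - sin α) := by
    rw [hsin_sub, sin_sub_sin]
    have hs : 0 ≤ sin ((θ - α) / 2) := sin_nonneg_of_nonneg_of_le_pi (by linarith) (by linarith)
    nlinarith
  rw [sin_sub] at hkey
  nlinarith

theorem stmt18_general (θ : ℝ) (hθ : θ ∈ Set.Ioo 0 (π/4))
    (u v w : EuclideanSpace ℝ (Fin 2))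
    (hang : EuclideanGeometry.angle w v u ≤ θ)
    (hlt : dist w v < dist u v / (2 * Real.cos θ)) :
    0 < dist u v - dist w v * Real.cos (EuclideanGeometry.angle w v u) ∧
    Real.tan (EuclideanGeometry.angle w u v) ≤
      dist w v * Real.sin θ / (dist u v - dist w v * Real.cos θ) := by
  obtain ⟨hθ0, hθ4⟩ := hθ
  have hcos : 0 < cos θ := cos_pos_of_mem_Ioo ⟨by linarith [pi_pos], by linarith⟩
  have hcos_sq : 1 < 2 * cos θ ^ 2 := by
    have : 0 < cos (2 * θ) := cos_pos_of_mem_Ioo ⟨by linarith [pi_pos], by linarith⟩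
    linarith [cos_two_mul θ]
  have hrc : dist w v < dist u v * cos θ := by
    refine hlt.trans_le ((div_le_iff₀ (by positivity)).2 ?_)
    nlinarith [dist_nonneg (x := u) (y := v)]
  have hc : 0 < dist u v := pos_of_mul_pos_left (dist_nonneg.trans_lt hrc) hcos.le
  refine ⟨by nlinarith [cos_le_one (∠ w v u), cos_le_one θ, dist_nonneg (x := w) (y := v)], ?_⟩
  rw [tan_angle_eq_dist_mul_sin_div]
  exact mul_sin_div_sub_mul_cos_le (angle_nonneg w v u) hang (by linarith [pi_pos])
    dist_nonneg hc hrc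

theorem stmt18 (θ : ℝ) (hθ : θ ∈ Set.Ioo 0 (π/4))
    (u v w : EuclideanSpace ℝ (Fin 2)) (huv : u ≠ v)
    (hang : EuclideanGeometry.angle w v u ≤ θ)
    (hlt : dist w v < dist u v / (2 * Real.cos θ)) :
    0 < dist u v - dist w v * Real.cos (EuclideanGeometry.angle w v u) ∧
    Real.tan (EuclideanGeometry.angle w u v) ≤
      dist w v * Real.sin θ / (dist u v - dist w v * Real.cos θ) :=
  stmt18_general θ hθ u v w hang hlt
end
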